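/- (Theorem 1, single cell) Let n, l be positive natural numbers, A an n×n real matrix, B an n×1 real matrix, K a 1×n real matrix, D an n×l real matrix. Let φ : ℝ → ℝ be an odd function, let 0 ≤ ρ₀ ≤ ρ₁, τ > 0, χ > 0, γ > 0, f̄ ≥ 0, and let P be a symmetric n×n real matrix with P − γI positive definite, such that for every diagonal matrix Ψ with each diagonal entry in {ρ₀, ρ₁} the block matrix [[(A+BKΨ)ᵀP + P(A+BKΨ) + τP, PD], [DᵀP, −χI_l]] is negative definite. Let f : ℝ → ℝˡ satisfy |f(t)|² ≤ f̄ for all t ≥ 0, and let x : ℝ → ℝⁿ be differentiable with x′(t) = A x(t) + B·(Σ_{j=1}^n k_j φ(x_j(t))) + D f(t) for all t ≥ 0, where K = [k₁, …, k_n]. Assume that for all t ≥ 0 and all j, ρ₀·x_j(t)² ≤ φ(x_j(t))·x_j(t) ≤ ρ₁·x_j(t)². Then V(t) = x(t)ᵀPx(t) satisfies V(t) ≤ χf̄/τ + (‖P‖·|x(0)|² + χf̄/τ)·e^{−τt} for all t ≥ 0, and limsup_{t→∞} |x(t)| ≤ √(χ f̄/(γτ)). -/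

import Mathlib

/-!
The sector condition bounds the `j`-th summand of the cross term `xᵀ P B K φ(x)` by the same
summand with `φ(x_j)` replaced by `d_j x_j`, where `d_j ∈ {ρ₀, ρ₁}` is chosen by the sign of
`(xᵀ P B K)_j x_j`. The LMI at this vertex `d` then gives `V' ≤ -τ V + χ |f|² ≤ -τ V + χ f̄`
for `V = xᵀ P x`, so Grönwall's inequality and `V(0) ≤ ‖P‖ |x(0)|²` give the exponential bound.
Finally `P ≥ γ I` gives `|x(t)|² ≤ V(t) / γ`, and the bound on the right tends to `χ f̄ / (γ τ)`.
-/

open Matrix Filter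

/-- A real matrix is negative definite (as a quadratic form) if `zᵀ M z < 0`
for every nonzero vector `z`. -/
def NegDefQF {m : Type*} [Fintype m] (M : Matrix m m ℝ) : Prop :=
  ∀ z : m → ℝ, z ≠ 0 → z ⬝ᵥ M *ᵥ z < 0

/-- Euclidean norm of a vector in `ℝⁿ`. -/
noncomputable def eucNorm {n : ℕ} (v : Fin n → ℝ) : ℝ :=
  Real.sqrt (∑ i, v i ^ 2)

/-- Operator norm (w.r.t. the Euclidean norm) of a square real matrix. -/
noncomputable def opNorm {n : ℕ} (P : Matrix (Fin n) (Fin n) ℝ) : ℝ :=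
  ‖LinearMap.toContinuousLinearMap (Matrix.toEuclideanLin P)‖

section LMI

variable {m p : Type*} [Fintype m] [Fintype p]

lemma Matrix.IsSymm.mulVec_dotProduct {P : Matrix m m ℝ} (hP : P.IsSymm) (u v : m → ℝ) :
    P *ᵥ u ⬝ᵥ v = u ⬝ᵥ P *ᵥ v := by
  rw [dotProduct_comm, ← dotProduct_transpose_mulVec, hP.eq]

lemma NegDefQF.dotProduct_mulVec_nonpos {M : Matrix m m ℝ} (hM : NegDefQF M) (z : m → ℝ) :
    z ⬝ᵥ M *ᵥ z ≤ 0 := by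
  rcases eq_or_ne z 0 with rfl | hz
  · simp
  · exact (hM z hz).le

variable [DecidableEq p]

def lmiBlock (M P : Matrix m m ℝ) (D : Matrix m p ℝ) (τ χ : ℝ) : Matrix (m ⊕ p) (m ⊕ p) ℝ :=
  fromBlocks (Mᵀ * P + P * M + τ • P) (P * D) (Dᵀ * P) ((-χ) • 1)

/-- Along `u' = M u + D w`, this is `(uᵀ P u)' + τ uᵀ P u - χ |w|²`. -/
lemma lmiBlock_quadForm {P : Matrix m m ℝ} (hP : P.IsSymm) (M : Matrix m m ℝ) (D : Matrix m p ℝ)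
    (τ χ : ℝ) (u : m → ℝ) (w : p → ℝ) :
    Sum.elim u w ⬝ᵥ lmiBlock M P D τ χ *ᵥ Sum.elim u w =
      2 * (u ⬝ᵥ P *ᵥ (M *ᵥ u + D *ᵥ w)) + τ * (u ⬝ᵥ P *ᵥ u) - χ * (w ⬝ᵥ w) := by
  simp only [lmiBlock, fromBlocks_mulVec, sumElim_dotProduct_sumElim, Sum.elim_comp_inl,
    Sum.elim_comp_inr, add_mulVec, ← mulVec_mulVec, smul_mulVec, one_mulVec, dotProduct_add,
    dotProduct_smul, mulVec_add, smul_eq_mul, dotProduct_transpose_mulVec]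
  rw [hP.mulVec_dotProduct, hP.mulVec_dotProduct]
  ring

/-- The sign of `c * s` decides which edge of the sector bounds `c * y`. -/
lemma exists_vertex_mul_le {ρ₀ ρ₁ s y : ℝ} (c : ℝ) (hy : s = 0 → y = 0)
    (h₀ : ρ₀ * s ^ 2 ≤ y * s) (h₁ : y * s ≤ ρ₁ * s ^ 2) :
    ∃ r, (r = ρ₀ ∨ r = ρ₁) ∧ c * y ≤ c * (r * s) := by
  rcases eq_or_ne s 0 with rfl | hs
  · exact ⟨ρ₀, .inl rfl, by simp [hy rfl]⟩
  have hs2 : 0 < s ^ 2 := by positivity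
  rcases le_total 0 (c * s) with hcs | hcs
  · refine ⟨ρ₁, .inr rfl, le_of_mul_le_mul_left ?_ hs2⟩
    nlinarith [mul_nonneg hcs (sub_nonneg.2 h₁)]
  · refine ⟨ρ₀, .inl rfl, le_of_mul_le_mul_left ?_ hs2⟩
    nlinarith [mul_nonneg_of_nonpos_of_nonpos hcs (sub_nonpos.2 h₀)]

variable [DecidableEq m]

theorem dissipation_le_of_vertex_lmi {A G P : Matrix m m ℝ} {D : Matrix m p ℝ}
    {τ χ ρ₀ ρ₁ : ℝ} {φ : ℝ → ℝ} (hP : P.IsSymm) (hφ : φ 0 = 0)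
    (hvertex : ∀ d : m → ℝ, (∀ i, d i = ρ₀ ∨ d i = ρ₁) →
      NegDefQF (lmiBlock (A + G * diagonal d) P D τ χ))
    {u : m → ℝ} (w : p → ℝ)
    (hsector : ∀ j, ρ₀ * u j ^ 2 ≤ φ (u j) * u j ∧ φ (u j) * u j ≤ ρ₁ * u j ^ 2) :
    2 * (u ⬝ᵥ P *ᵥ (A *ᵥ u + G *ᵥ (fun j => φ (u j)) + D *ᵥ w)) + τ * (u ⬝ᵥ P *ᵥ u) ≤
      χ * (w ⬝ᵥ w) := by
  choose d hd hle using fun j => exists_vertex_mul_le (((u ᵥ* P) ᵥ* G) j)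
    (fun h => by rw [h, hφ]) (hsector j).1 (hsector j).2
  have hG : u ⬝ᵥ P *ᵥ (G *ᵥ fun j => φ (u j)) ≤ u ⬝ᵥ P *ᵥ ((G * diagonal d) *ᵥ u) := by
    simp only [← mulVec_mulVec, dotProduct_mulVec u P, dotProduct_mulVec _ G]
    exact Finset.sum_le_sum fun j _ => (hle j).trans_eq (by rw [mulVec_diagonal])
  have hneg := (hvertex d hd).dotProduct_mulVec_nonpos (Sum.elim u w)
  rw [lmiBlock_quadForm hP] at hneg
  simp only [add_mulVec, mulVec_add, dotProduct_add] at hneg ⊢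
  linarith

end LMI

lemma mul_mulVec_of_fin_one {m n : Type*} [Fintype n] (B : Matrix m (Fin 1) ℝ)
    (K : Matrix (Fin 1) n ℝ) (y : n → ℝ) :
    (B * K) *ᵥ y = fun i => B i 0 * ∑ j, K 0 j * y j := by
  ext i
  simp [mulVec, dotProduct, mul_apply, Finset.mul_sum, mul_assoc]

lemma HasDerivAt.dotProduct {ι : Type*} [Fintype ι] {x y : ℝ → ι → ℝ} {x' y' : ι → ℝ} {t : ℝ}
    (hx : HasDerivAt x x' t) (hy : HasDerivAt y y' t) :
    HasDerivAt (fun s => x s ⬝ᵥ y s) (x' ⬝ᵥ y t + x t ⬝ᵥ y') t := by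
  simp only [_root_.dotProduct, ← Finset.sum_add_distrib]
  exact HasDerivAt.fun_sum fun i _ => (hasDerivAt_pi.1 hx i).mul (hasDerivAt_pi.1 hy i)

lemma HasDerivAt.mulVec {ι κ : Type*} [Fintype κ] (M : Matrix ι κ ℝ) {x : ℝ → κ → ℝ}
    {x' : κ → ℝ} {t : ℝ} (hx : HasDerivAt x x' t) :
    HasDerivAt (fun s => M *ᵥ x s) (M *ᵥ x') t :=
  hasDerivAt_pi.2 fun i => ((hasDerivAt_const t (M i)).dotProduct hx).congr_deriv (by simp; rfl)

lemma HasDerivAt.dotProduct_mulVec_self {ι : Type*} [Fintype ι] {P : Matrix ι ι ℝ}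
    (hP : P.IsSymm) {x : ℝ → ι → ℝ} {x' : ι → ℝ} {t : ℝ} (hx : HasDerivAt x x' t) :
    HasDerivAt (fun s => x s ⬝ᵥ P *ᵥ x s) (2 * (x t ⬝ᵥ P *ᵥ x')) t := by
  convert hx.dotProduct (hx.mulVec P) using 1
  rw [dotProduct_comm, hP.mulVec_dotProduct]
  ring

lemma le_of_hasDerivAt_le_neg_mul_add {V V' : ℝ → ℝ} {τ ε t : ℝ} (hτ : τ ≠ 0)
    (hV : ∀ s ≥ 0, HasDerivAt V (V' s) s) (hV' : ∀ s ≥ 0, V' s ≤ -τ * V s + ε) (ht : 0 ≤ t) :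
    V t ≤ ε / τ + (V 0 - ε / τ) * Real.exp (-τ * t) := by
  have hgronwall := le_gronwallBound_of_liminf_deriv_right_le (f := V) (f' := V') (a := 0)
    (fun s hs => (hV s hs.1).continuousAt.continuousWithinAt)
    (fun s hs r hr => (hV s hs.1).hasDerivWithinAt.liminf_right_slope_le hr)
    le_rfl (fun s hs => hV' s hs.1) t ⟨ht, le_rfl⟩
  rw [gronwallBound_of_K_ne_0 (neg_ne_zero.2 hτ), sub_zero, div_neg] at hgronwall
  linarith

lemma dotProduct_self_eq_sum_sq {ι : Type*} [Fintype ι] (v : ι → ℝ) : v ⬝ᵥ v = ∑ i, v i ^ 2 := by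
  simp only [dotProduct, sq]

lemma eucNorm_sq {n : ℕ} (v : Fin n → ℝ) : eucNorm v ^ 2 = v ⬝ᵥ v := by
  rw [eucNorm, Real.sq_sqrt (by positivity), dotProduct_self_eq_sum_sq]

lemma eucNorm_eq_norm_toLp {n : ℕ} (v : Fin n → ℝ) : eucNorm v = ‖WithLp.toLp 2 v‖ := by
  simp [eucNorm, EuclideanSpace.norm_eq]

lemma dotProduct_mulVec_self_le_opNorm_mul {n : ℕ} (P : Matrix (Fin n) (Fin n) ℝ) (u : Fin n → ℝ) :
    u ⬝ᵥ P *ᵥ u ≤ opNorm P * eucNorm u ^ 2 := by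
  set T := LinearMap.toContinuousLinearMap (toEuclideanLin P)
  have hinner : u ⬝ᵥ P *ᵥ u = inner ℝ (WithLp.toLp 2 u) (T (WithLp.toLp 2 u)) := by
    simp [T, PiLp.inner_apply, dotProduct, mul_comm]
  calc u ⬝ᵥ P *ᵥ u ≤ ‖WithLp.toLp 2 u‖ * ‖T (WithLp.toLp 2 u)‖ := hinner ▸ real_inner_le_norm _ _
    _ ≤ ‖WithLp.toLp 2 u‖ * (‖T‖ * ‖WithLp.toLp 2 u‖) := by gcongr; exact T.le_opNorm _
    _ = opNorm P * eucNorm u ^ 2 := by rw [opNorm, eucNorm_eq_norm_toLp]; ring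

lemma mul_eucNorm_sq_le_dotProduct_mulVec_self {n : ℕ} {P : Matrix (Fin n) (Fin n) ℝ} {γ : ℝ}
    (hPγ : ∀ z : Fin n → ℝ, z ≠ 0 → 0 < z ⬝ᵥ (P - γ • (1 : Matrix (Fin n) (Fin n) ℝ)) *ᵥ z)
    (z : Fin n → ℝ) : γ * eucNorm z ^ 2 ≤ z ⬝ᵥ P *ᵥ z := by
  rcases eq_or_ne z 0 with rfl | hz
  · simp [eucNorm]
  · have h := hPγ z hz
    rw [sub_mulVec, dotProduct_sub, smul_mulVec, one_mulVec, dotProduct_smul, smul_eq_mul] at h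
    rw [eucNorm_sq]
    linarith

lemma limsup_le_of_eventually_le_of_tendsto {α : Type*} {l : Filter α} [l.NeBot] {g h : α → ℝ}
    {b L : ℝ} (hg : ∀ a, b ≤ g a) (hgh : ∀ᶠ a in l, g a ≤ h a) (hh : Tendsto h l (nhds L)) :
    limsup g l ≤ L :=
  (limsup_le_limsup hgh (isCoboundedUnder_le_of_le l hg) hh.isBoundedUnder_le).trans_eq
    hh.limsup_eq

theorem stmt_8_general (n l : ℕ)
    (A : Matrix (Fin n) (Fin n) ℝ) (B : Matrix (Fin n) (Fin 1) ℝ)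
    (K : Matrix (Fin 1) (Fin n) ℝ) (D : Matrix (Fin n) (Fin l) ℝ)
    (φ : ℝ → ℝ) (hodd : ∀ s, φ (-s) = -φ s)
    (ρ₀ ρ₁ τ χ γ fbar : ℝ)
    (hτ : 0 < τ) (hχ : 0 < χ) (hγ : 0 < γ) (hf : 0 ≤ fbar)
    (P : Matrix (Fin n) (Fin n) ℝ) (hPsymm : P.IsSymm)
    (hPγ : ∀ z : Fin n → ℝ, z ≠ 0 →
      0 < z ⬝ᵥ (P - γ • (1 : Matrix (Fin n) (Fin n) ℝ)) *ᵥ z)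
    (hvertex : ∀ d : Fin n → ℝ, (∀ i, d i = ρ₀ ∨ d i = ρ₁) →
      NegDefQF (Matrix.fromBlocks
        ((A + B * K * Matrix.diagonal d)ᵀ * P + P * (A + B * K * Matrix.diagonal d) + τ • P)
        (P * D) (Dᵀ * P) ((-χ) • (1 : Matrix (Fin l) (Fin l) ℝ))))
    (f : ℝ → Fin l → ℝ) (hfb : ∀ t ≥ (0 : ℝ), ∑ i, (f t i) ^ 2 ≤ fbar)
    (x : ℝ → Fin n → ℝ)
    (hx : ∀ t ≥ (0 : ℝ), HasDerivAt x
      (A *ᵥ x t + (fun i => B i 0 * ∑ j, K 0 j * φ (x t j)) + D *ᵥ f t) t)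
    (hsector : ∀ t ≥ (0 : ℝ), ∀ j,
      ρ₀ * (x t j) ^ 2 ≤ φ (x t j) * x t j ∧ φ (x t j) * x t j ≤ ρ₁ * (x t j) ^ 2) :
    (∀ t ≥ (0 : ℝ),
      x t ⬝ᵥ P *ᵥ x t ≤ χ * fbar / τ +
        (opNorm P * (eucNorm (x 0)) ^ 2 + χ * fbar / τ) * Real.exp (-τ * t)) ∧
    limsup (fun t => eucNorm (x t)) atTop ≤ Real.sqrt (χ * fbar / (γ * τ)) := by
  have hφ : φ 0 = 0 := by simpa [self_eq_neg] using hodd 0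
  set c := χ * fbar / τ
  set C := opNorm P * eucNorm (x 0) ^ 2 + c
  have hdissipation : ∀ t ≥ (0 : ℝ),
      2 * (x t ⬝ᵥ P *ᵥ (A *ᵥ x t + (fun i => B i 0 * ∑ j, K 0 j * φ (x t j)) + D *ᵥ f t)) ≤
        -τ * (x t ⬝ᵥ P *ᵥ x t) + χ * fbar := by
    intro t ht
    have h := dissipation_le_of_vertex_lmi (G := B * K) hPsymm hφ hvertex (f t) (hsector t ht)
    rw [mul_mulVec_of_fin_one] at h
    nlinarith [hfb t ht, dotProduct_self_eq_sum_sq (f t)]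
  have hV : ∀ t ≥ (0 : ℝ), x t ⬝ᵥ P *ᵥ x t ≤ c + C * Real.exp (-τ * t) := by
    intro t ht
    have h := le_of_hasDerivAt_le_neg_mul_add hτ.ne'
      (fun s hs => (hx s hs).dotProduct_mulVec_self hPsymm) hdissipation ht
    have hc : 0 ≤ c := by positivity
    nlinarith [dotProduct_mulVec_self_le_opNorm_mul P (x 0), Real.exp_pos (-τ * t)]
  have hdecay : Tendsto (fun t => Real.exp (-τ * t)) atTop (nhds 0) := by
    simpa only [neg_mul, Function.comp_def, id] using
      Real.tendsto_exp_neg_atTop_nhds_zero.comp (tendsto_id.const_mul_atTop hτ)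
  have hlim : Tendsto (fun t => √((c + C * Real.exp (-τ * t)) / γ)) atTop
      (nhds √(χ * fbar / (γ * τ))) := by
    convert (((hdecay.const_mul C).const_add c).div_const γ).sqrt using 3
    rw [mul_zero, add_zero, div_div, mul_comm γ]
  refine ⟨hV, limsup_le_of_eventually_le_of_tendsto (fun t => Real.sqrt_nonneg _) ?_ hlim⟩
  · filter_upwards [eventually_ge_atTop 0] with t ht
    refine Real.le_sqrt_of_sq_le ((le_div_iff₀ hγ).2 ?_)
    nlinarith [mul_eucNorm_sq_le_dotProduct_mulVec_self hPγ (x t), hV t ht]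

/-- Theorem 1, single cell: for the closed loop
`x' = Ax + B(Σⱼ kⱼ φ(xⱼ)) + Df` with the sector condition
`ρ₀ xⱼ² ≤ φ(xⱼ)xⱼ ≤ ρ₁ xⱼ²` along the trajectory, and the LMI satisfied at the
vertices, the Lyapunov function `V = xᵀPx` obeys the exponential bound, and
`limsup |x(t)| ≤ √(χf̄/(γτ))`. -/
theorem stmt_8 (n l : ℕ) (hn : 0 < n) (hl : 0 < l)
    (A : Matrix (Fin n) (Fin n) ℝ) (B : Matrix (Fin n) (Fin 1) ℝ)
    (K : Matrix (Fin 1) (Fin n) ℝ) (D : Matrix (Fin n) (Fin l) ℝ)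
    (φ : ℝ → ℝ) (hodd : ∀ s, φ (-s) = -φ s)
    (ρ₀ ρ₁ τ χ γ fbar : ℝ) (hρ₀ : 0 ≤ ρ₀) (hρ : ρ₀ ≤ ρ₁)
    (hτ : 0 < τ) (hχ : 0 < χ) (hγ : 0 < γ) (hf : 0 ≤ fbar)
    (P : Matrix (Fin n) (Fin n) ℝ) (hPsymm : P.IsSymm)
    (hPγ : ∀ z : Fin n → ℝ, z ≠ 0 →
      0 < z ⬝ᵥ (P - γ • (1 : Matrix (Fin n) (Fin n) ℝ)) *ᵥ z)
    (hvertex : ∀ d : Fin n → ℝ, (∀ i, d i = ρ₀ ∨ d i = ρ₁) →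
      NegDefQF (Matrix.fromBlocks
        ((A + B * K * Matrix.diagonal d)ᵀ * P + P * (A + B * K * Matrix.diagonal d) + τ • P)
        (P * D) (Dᵀ * P) ((-χ) • (1 : Matrix (Fin l) (Fin l) ℝ))))
    (f : ℝ → Fin l → ℝ) (hfb : ∀ t ≥ (0 : ℝ), ∑ i, (f t i) ^ 2 ≤ fbar)
    (x : ℝ → Fin n → ℝ)
    (hx : ∀ t ≥ (0 : ℝ), HasDerivAt x
      (A *ᵥ x t + (fun i => B i 0 * ∑ j, K 0 j * φ (x t j)) + D *ᵥ f t) t)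
    (hsector : ∀ t ≥ (0 : ℝ), ∀ j,
      ρ₀ * (x t j) ^ 2 ≤ φ (x t j) * x t j ∧ φ (x t j) * x t j ≤ ρ₁ * (x t j) ^ 2) :
    (∀ t ≥ (0 : ℝ),
      x t ⬝ᵥ P *ᵥ x t ≤ χ * fbar / τ +
        (opNorm P * (eucNorm (x 0)) ^ 2 + χ * fbar / τ) * Real.exp (-τ * t)) ∧
    limsup (fun t => eucNorm (x t)) atTop ≤ Real.sqrt (χ * fbar / (γ * τ)) :=
  stmt_8_general n l A B K D φ hodd ρ₀ ρ₁ τ χ γ fbar hτ hχ hγ hf P hPsymm hPγ hvertex f hfb x hx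
    hsector
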